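/- arXiv:1706.05949 — 5 statements merged into one kernel-verified Lean document; each statement's English description precedes it below -/
import Mathlib

section
/- For λ > 0, the system s = (1+λt²)/(1+λt²+λt), t = (1+λs²)/(1+λs²+λs) with s, t ∈ (0,1) has a unique solution, and this solution satisfies s = t. -/
/-!
Clearing denominators, the difference of the two equations factors as
`(s - t) * (1 + λ (s + t) - λ s t) = 0`, and the second factor is positive on `(0,1)²`, so every
solution is diagonal. On the diagonal the system reduces to `λ t³ + t = 1`, whose left side is
strictly increasing and runs from `0` to `1 + λ` on `[0, 1]`.
-/

noncomputable def hcMap (lam t : ℝ) : ℝ := (1 + lam * t ^ 2) / (1 + lam * t ^ 2 + lam * t)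

section

variable {lam : ℝ}

theorem eq_hcMap_iff (hlam : 0 ≤ lam) {s t : ℝ} (ht : 0 ≤ t) :
    s = hcMap lam t ↔ s * (1 + lam * t ^ 2 + lam * t) = 1 + lam * t ^ 2 := by
  have hden : 0 < 1 + lam * t ^ 2 + lam * t := by positivity
  rw [hcMap, eq_div_iff hden.ne']

theorem eq_of_eq_hcMap_of_eq_hcMap (hlam : 0 ≤ lam) {s t : ℝ} (hs₀ : 0 ≤ s) (hs₁ : s ≤ 1)
    (ht : 0 ≤ t) (hst : s = hcMap lam t) (hts : t = hcMap lam s) : s = t := by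
  rw [eq_hcMap_iff hlam ht] at hst
  rw [eq_hcMap_iff hlam hs₀] at hts
  have hfactor : (s - t) * (1 + lam * (s + t * (1 - s))) = 0 := by
    linear_combination hst - hts
  have hpos : 0 < 1 + lam * (s + t * (1 - s)) := by
    have : 0 ≤ 1 - s := by linarith
    positivity
  linarith [(mul_eq_zero.mp hfactor).resolve_right hpos.ne']

theorem eq_hcMap_self_iff (hlam : 0 ≤ lam) {t : ℝ} (ht : 0 ≤ t) :
    t = hcMap lam t ↔ lam * t ^ 3 + t = 1 := by
  rw [eq_hcMap_iff hlam ht]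
  constructor <;> intro h <;> linear_combination h

theorem strictMono_cubic (hlam : 0 ≤ lam) : StrictMono fun t : ℝ => lam * t ^ 3 + t := by
  have h := strictMono_id.add_monotone
    ((Odd.strictMono_pow (by decide : Odd 3)).monotone.const_mul hlam)
  simpa only [id, add_comm] using h

theorem exists_cubic_eq_one_mem_Ioo (hlam : 0 < lam) :
    ∃ t ∈ Set.Ioo (0 : ℝ) 1, lam * t ^ 3 + t = 1 := by
  have hcont : ContinuousOn (fun t : ℝ => lam * t ^ 3 + t) (Set.Icc 0 1) := by fun_prop
  exact intermediate_value_Ioo zero_le_one hcont ⟨by norm_num, by norm_num [hlam]⟩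

end

/-- The I₃ system has a unique solution in (0,1)², which is diagonal. -/
theorem I3_unique_solution (lam : ℝ) (hlam : 0 < lam) :
    (∃! p : ℝ × ℝ, p.1 ∈ Set.Ioo (0 : ℝ) 1 ∧ p.2 ∈ Set.Ioo (0 : ℝ) 1 ∧
      p.1 = (1 + lam * p.2 ^ 2) / (1 + lam * p.2 ^ 2 + lam * p.2) ∧
      p.2 = (1 + lam * p.1 ^ 2) / (1 + lam * p.1 ^ 2 + lam * p.1)) ∧
    (∀ p : ℝ × ℝ, p.1 ∈ Set.Ioo (0 : ℝ) 1 → p.2 ∈ Set.Ioo (0 : ℝ) 1 →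
      p.1 = (1 + lam * p.2 ^ 2) / (1 + lam * p.2 ^ 2 + lam * p.2) →
      p.2 = (1 + lam * p.1 ^ 2) / (1 + lam * p.1 ^ 2 + lam * p.1) →
      p.1 = p.2) := by
  have diagonal : ∀ p : ℝ × ℝ, p.1 ∈ Set.Ioo (0 : ℝ) 1 → p.2 ∈ Set.Ioo (0 : ℝ) 1 →
      p.1 = hcMap lam p.2 → p.2 = hcMap lam p.1 → p.1 = p.2 :=
    fun p hs ht hst hts =>
      eq_of_eq_hcMap_of_eq_hcMap hlam.le hs.1.le hs.2.le ht.1.le hst hts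
  refine ⟨?_, diagonal⟩
  obtain ⟨t₀, ht₀, hcubic₀⟩ := exists_cubic_eq_one_mem_Ioo hlam
  have hfix₀ : t₀ = hcMap lam t₀ := (eq_hcMap_self_iff hlam.le ht₀.1.le).mpr hcubic₀
  refine ⟨(t₀, t₀), ⟨ht₀, ht₀, hfix₀, hfix₀⟩, ?_⟩
  rintro ⟨s, t⟩ ⟨hs, ht, hst, hts⟩
  obtain rfl : s = t := diagonal (s, t) hs ht hst hts
  have hcubic : lam * s ^ 3 + s = 1 := (eq_hcMap_self_iff hlam.le hs.1.le).mp hst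
  obtain rfl : s = t₀ := (strictMono_cubic hlam.le).injective (hcubic.trans hcubic₀.symm)
  rfl
end

section
/- For integer k ≥ 2, λ > 0, and x, y ∈ (0,1): if λx^k + λxy^k + x - λy^k = 1 and λy^k + λyx^k + y - λx^k = 1, then x = y. -/
/-! Subtracting the two equations gives `λ(2 - x)(x^k - y^k) + (λx^k + 1)(x - y) = 0`, that is,
`g x = g y` for `g t = λ(2 - x) t^k + (λx^k + 1) t`, which is strictly increasing on `[0, ∞)`. -/

theorem strictMonoOn_mul_pow_add_mul {lam a : ℝ} (k : ℕ) (hlam : 0 ≤ lam) (ha₀ : 0 ≤ a)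
    (ha₂ : a ≤ 2) :
    StrictMonoOn (fun t : ℝ => lam * (2 - a) * t ^ k + (lam * a ^ k + 1) * t) (Set.Ici 0) := by
  intro s hs t _ hst
  have hcoeff : 0 ≤ lam * (2 - a) := mul_nonneg hlam (by linarith)
  have hslope : 0 < lam * a ^ k + 1 := by positivity
  have hpow : s ^ k ≤ t ^ k := pow_le_pow_left₀ hs hst.le k
  exact add_lt_add_of_le_of_lt (mul_le_mul_of_nonneg_left hpow hcoeff)
    (mul_lt_mul_of_pos_left hst hslope)

theorem I4_diagonal_general (k : ℕ) (lam x y : ℝ) (hlam : 0 < lam)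
    (hx : x ∈ Set.Ioo (0 : ℝ) 1) (hy : y ∈ Set.Ioo (0 : ℝ) 1)
    (h1 : lam * x ^ k + lam * x * y ^ k + x - lam * y ^ k = 1)
    (h2 : lam * y ^ k + lam * y * x ^ k + y - lam * x ^ k = 1) :
    x = y := by
  obtain ⟨hx₀, hx₁⟩ := hx
  refine (strictMonoOn_mul_pow_add_mul k hlam.le hx₀.le (by linarith)).injOn
    (Set.mem_Ici.2 hx₀.le) (Set.mem_Ici.2 hy.1.le) ?_
  linear_combination h1 - h2

/-- Solutions of the I₄ system in (0,1)² are diagonal. -/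
theorem I4_diagonal (k : ℕ) (hk : 2 ≤ k) (lam x y : ℝ) (hlam : 0 < lam)
    (hx : x ∈ Set.Ioo (0 : ℝ) 1) (hy : y ∈ Set.Ioo (0 : ℝ) 1)
    (h1 : lam * x ^ k + lam * x * y ^ k + x - lam * y ^ k = 1)
    (h2 : lam * y ^ k + lam * y * x ^ k + y - lam * x ^ k = 1) :
    x = y :=
  I4_diagonal_general k lam x y hlam hx hy h1 h2
end

section
/- For integer k ≥ 2 and λ > 0, the system λx^k + λxy^k + x - λy^k = 1, λy^k + λyx^k + y - λx^k = 1 has exactly one solution (x,y) with x, y ∈ (0,1), and it satisfies x = y. -/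
/-!
Subtracting the second equation from the first gives
`λ(xᵏ - yᵏ)(2 - y) + λyᵏ(x - y) + (x - y) = 0`, and on `[0,2]²` the left side has the sign of
`x - y`; hence every solution is diagonal. On the diagonal both equations read
`λx^(k+1) + x = 1`, whose left side increases strictly from `0` to `λ + 1` on `[0,1]`.
-/

open Set

lemma I4_lhs_sub_lhs (k : ℕ) (lam x y : ℝ) :
    (lam * x ^ k + lam * x * y ^ k + x - lam * y ^ k) -
        (lam * y ^ k + lam * y * x ^ k + y - lam * x ^ k) =
      lam * (x ^ k - y ^ k) * (2 - y) + lam * y ^ k * (x - y) + (x - y) := by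
  ring

lemma I4_lhs_lt_lhs_of_lt (k : ℕ) {lam x y : ℝ} (hlam : 0 ≤ lam) (hy₀ : 0 ≤ y) (hy₂ : y ≤ 2)
    (hyx : y < x) :
    lam * y ^ k + lam * y * x ^ k + y - lam * x ^ k <
      lam * x ^ k + lam * x * y ^ k + x - lam * y ^ k := by
  have hpow : 0 ≤ x ^ k - y ^ k := sub_nonneg.mpr (pow_le_pow_left₀ hy₀ hyx.le k)
  have h₁ : 0 ≤ lam * (x ^ k - y ^ k) * (2 - y) :=
    mul_nonneg (mul_nonneg hlam hpow) (sub_nonneg.mpr hy₂)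
  have h₂ : 0 ≤ lam * y ^ k * (x - y) :=
    mul_nonneg (mul_nonneg hlam (pow_nonneg hy₀ k)) (sub_nonneg.mpr hyx.le)
  linarith [I4_lhs_sub_lhs k lam x y]

lemma eq_of_I4_system (k : ℕ) {lam x y : ℝ} (hlam : 0 ≤ lam)
    (hx : x ∈ Icc (0 : ℝ) 2) (hy : y ∈ Icc (0 : ℝ) 2)
    (e₁ : lam * x ^ k + lam * x * y ^ k + x - lam * y ^ k = 1)
    (e₂ : lam * y ^ k + lam * y * x ^ k + y - lam * x ^ k = 1) : x = y := by
  rcases lt_trichotomy x y with hxy | hxy | hxy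
  · linarith [I4_lhs_lt_lhs_of_lt k hlam hx.1 hx.2 hxy]
  · exact hxy
  · linarith [I4_lhs_lt_lhs_of_lt k hlam hy.1 hy.2 hxy]

lemma I4_lhs_diag (k : ℕ) (lam x : ℝ) :
    lam * x ^ k + lam * x * x ^ k + x - lam * x ^ k = lam * x ^ (k + 1) + x := by
  ring

lemma strictMonoOn_mul_pow_add (k : ℕ) {lam : ℝ} (hlam : 0 ≤ lam) :
    StrictMonoOn (fun x : ℝ => lam * x ^ k + x) (Ici 0) := fun _ ha _ _ hab =>
  add_lt_add_of_le_of_lt (mul_le_mul_of_nonneg_left (pow_le_pow_left₀ ha hab.le k) hlam) hab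

lemma existsUnique_mul_pow_succ_add_eq_one (k : ℕ) {lam : ℝ} (hlam : 0 < lam) :
    ∃! x : ℝ, x ∈ Ioo (0 : ℝ) 1 ∧ lam * x ^ (k + 1) + x = 1 := by
  have hcont : ContinuousOn (fun x : ℝ => lam * x ^ (k + 1) + x) (Icc 0 1) := by fun_prop
  have hmem : (1 : ℝ) ∈ Ioo (lam * 0 ^ (k + 1) + 0) (lam * 1 ^ (k + 1) + 1) := by
    simp [hlam]
  obtain ⟨x, hx, hgx⟩ := intermediate_value_Ioo zero_le_one hcont hmem
  refine ⟨x, ⟨hx, hgx⟩, fun y ⟨hy, hgy⟩ => ?_⟩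
  exact (strictMonoOn_mul_pow_add (k + 1) hlam.le).injOn hy.1.le hx.1.le
    (hgy.trans hgx.symm)

theorem I4_unique_solution_general (k : ℕ) (lam : ℝ) (hlam : 0 < lam) :
    (∃! p : ℝ × ℝ, p.1 ∈ Set.Ioo (0 : ℝ) 1 ∧ p.2 ∈ Set.Ioo (0 : ℝ) 1 ∧
      lam * p.1 ^ k + lam * p.1 * p.2 ^ k + p.1 - lam * p.2 ^ k = 1 ∧
      lam * p.2 ^ k + lam * p.2 * p.1 ^ k + p.2 - lam * p.1 ^ k = 1) ∧
    (∀ p : ℝ × ℝ, p.1 ∈ Set.Ioo (0 : ℝ) 1 → p.2 ∈ Set.Ioo (0 : ℝ) 1 →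
      lam * p.1 ^ k + lam * p.1 * p.2 ^ k + p.1 - lam * p.2 ^ k = 1 →
      lam * p.2 ^ k + lam * p.2 * p.1 ^ k + p.2 - lam * p.1 ^ k = 1 →
      p.1 = p.2) := by
  have diag : ∀ p : ℝ × ℝ, p.1 ∈ Set.Ioo (0 : ℝ) 1 → p.2 ∈ Set.Ioo (0 : ℝ) 1 →
      lam * p.1 ^ k + lam * p.1 * p.2 ^ k + p.1 - lam * p.2 ^ k = 1 →
      lam * p.2 ^ k + lam * p.2 * p.1 ^ k + p.2 - lam * p.1 ^ k = 1 → p.1 = p.2 :=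
    fun p hx hy e₁ e₂ => eq_of_I4_system k hlam.le
      ⟨hx.1.le, by linarith [hx.2]⟩ ⟨hy.1.le, by linarith [hy.2]⟩ e₁ e₂
  obtain ⟨x, ⟨hx, hgx⟩, huniq⟩ := existsUnique_mul_pow_succ_add_eq_one k hlam
  refine ⟨⟨(x, x), ⟨hx, hx, ?_, ?_⟩, ?_⟩, diag⟩
  · rwa [I4_lhs_diag]
  · rwa [I4_lhs_diag]
  rintro ⟨a, b⟩ ⟨ha, hb, e₁, e₂⟩
  obtain rfl : a = b := diag (a, b) ha hb e₁ e₂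
  rw [I4_lhs_diag] at e₁
  rw [huniq a ⟨ha, e₁⟩]

/-- The I₄ system has a unique solution in (0,1)², and it is diagonal. -/
theorem I4_unique_solution (k : ℕ) (hk : 2 ≤ k) (lam : ℝ) (hlam : 0 < lam) :
    (∃! p : ℝ × ℝ, p.1 ∈ Set.Ioo (0 : ℝ) 1 ∧ p.2 ∈ Set.Ioo (0 : ℝ) 1 ∧
      lam * p.1 ^ k + lam * p.1 * p.2 ^ k + p.1 - lam * p.2 ^ k = 1 ∧
      lam * p.2 ^ k + lam * p.2 * p.1 ^ k + p.2 - lam * p.1 ^ k = 1) ∧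
    (∀ p : ℝ × ℝ, p.1 ∈ Set.Ioo (0 : ℝ) 1 → p.2 ∈ Set.Ioo (0 : ℝ) 1 →
      lam * p.1 ^ k + lam * p.1 * p.2 ^ k + p.1 - lam * p.2 ^ k = 1 →
      lam * p.2 ^ k + lam * p.2 * p.1 ^ k + p.2 - lam * p.1 ^ k = 1 →
      p.1 = p.2) :=
  I4_unique_solution_general k lam hlam
end

section
/- For λ > 0 and s, t ∈ (0,1) with s ≠ t, if s = (1+λs²)/(1+λs²+λt) and t = (1+λt²)/(1+λt²+λs), then λ·t·(1-t) = 1 (i.e., λ = φ₃(t)). -/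
/-!
Clearing denominators, both equations read `x * (1 + λ x² + λ y) = 1 + λ x²`. Their difference
factors as `(s - t) * (λ (s + t - s² - s t - t²) - 1)`, so off the diagonal
`λ (s + t - s² - s t - t²) = 1`. Substituting this back into the first equation leaves
`(s + t - 1) (s + t - s t) = 0`, and `s + t - s t = s + t (1 - s) > 0` on `(0,1)²`, so `s + t = 1`;
then `s + t - s² - s t - t² = s t = t (1 - t)`.
-/

theorem mul_eq_of_eq_div_of_ne_zero {K : Type*} [DivisionRing K] {x a b : K}
    (h : x = a / b) (hx : x ≠ 0) : x * b = a :=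
  (eq_div_iff (div_ne_zero_iff.mp (h ▸ hx)).2).mp h

section I2System

variable {R : Type*} [CommRing R] [IsDomain R] {lam s t : R}

theorem lam_mul_eq_one_of_ne (hst : s ≠ t)
    (h1 : s * (1 + lam * s ^ 2 + lam * t) = 1 + lam * s ^ 2)
    (h2 : t * (1 + lam * t ^ 2 + lam * s) = 1 + lam * t ^ 2) :
    lam * (s + t - s ^ 2 - s * t - t ^ 2) = 1 := by
  have hfac : (s - t) * (lam * (s + t - s ^ 2 - s * t - t ^ 2) - 1) = 0 := by
    linear_combination h2 - h1
  exact sub_eq_zero.mp ((mul_eq_zero.mp hfac).resolve_left (sub_ne_zero.mpr hst))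

theorem add_eq_one_of_lam_mul_eq_one (hpos : s + t - s * t ≠ 0)
    (h1 : s * (1 + lam * s ^ 2 + lam * t) = 1 + lam * s ^ 2)
    (hE : lam * (s + t - s ^ 2 - s * t - t ^ 2) = 1) :
    s + t = 1 := by
  have hfac : (s + t - 1) * (s + t - s * t) = 0 := by
    linear_combination (s + t - s ^ 2 - s * t - t ^ 2) * h1 + (s ^ 2 - s ^ 3 - s * t) * hE
  exact sub_eq_zero.mp ((mul_eq_zero.mp hfac).resolve_right hpos)

end I2System

theorem add_sub_mul_pos {s t : ℝ} (hs0 : 0 < s) (hs1 : s ≤ 1) (ht : 0 ≤ t) :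
    0 < s + t - s * t := by
  nlinarith [mul_nonneg ht (sub_nonneg.mpr hs1)]

theorem I2_offdiag_phi3_general (lam s t : ℝ)
    (hs : s ∈ Set.Ioo (0 : ℝ) 1) (ht : t ∈ Set.Ioo (0 : ℝ) 1) (hst : s ≠ t)
    (h1 : s = (1 + lam * s ^ 2) / (1 + lam * s ^ 2 + lam * t))
    (h2 : t = (1 + lam * t ^ 2) / (1 + lam * t ^ 2 + lam * s)) :
    lam * (t * (1 - t)) = 1 := by
  have h1' := mul_eq_of_eq_div_of_ne_zero h1 hs.1.ne'
  have h2' := mul_eq_of_eq_div_of_ne_zero h2 ht.1.ne'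
  have hE := lam_mul_eq_one_of_ne hst h1' h2'
  have hsum : s + t = 1 :=
    add_eq_one_of_lam_mul_eq_one (add_sub_mul_pos hs.1 hs.2.le ht.1.le).ne' h1' hE
  linear_combination hE + lam * s * hsum

/-- Off-diagonal solutions of the I₂ system satisfy λ·t·(1-t) = 1. -/
theorem I2_offdiag_phi3 (lam s t : ℝ) (hlam : 0 < lam)
    (hs : s ∈ Set.Ioo (0 : ℝ) 1) (ht : t ∈ Set.Ioo (0 : ℝ) 1) (hst : s ≠ t)
    (h1 : s = (1 + lam * s ^ 2) / (1 + lam * s ^ 2 + lam * t))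
    (h2 : t = (1 + lam * t ^ 2) / (1 + lam * t ^ 2 + lam * s)) :
    lam * (t * (1 - t)) = 1 :=
  I2_offdiag_phi3_general lam s t hs ht hst h1 h2
end

section
/- For λ > 4, letting t₁ < t₂ be the two solutions in (0,1) of λ·t·(1-t) = 1, the pair (s,t) = (t₂,t₁) satisfies s = (1+λs²)/(1+λs²+λt) and t = (1+λt²)/(1+λt²+λs). -/
/-! By Vieta, `t₁ + t₂ = 1` and `λt₁t₂ = 1`. For any such pair the denominator
`1 + λs² + λt = 1 + λs² + λ - λs` collapses to `λ`, and `sλ = 1 + λs²` is again `λs(1 - s) = 1`. -/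

theorem eq_div_of_add_eq_one_of_mul_mul_eq_one {K : Type*} [Field K] {lam s t : K}
    (hsum : s + t = 1) (hprod : lam * s * t = 1) :
    s = (1 + lam * s ^ 2) / (1 + lam * s ^ 2 + lam * t) := by
  have hden : 1 + lam * s ^ 2 + lam * t = lam := by
    linear_combination (lam * s + lam) * hsum - hprod
  have hlam : lam ≠ 0 := by rintro rfl; simp at hprod
  rw [hden, eq_div_iff hlam]
  linear_combination (-s) * hsum * lam + hprod

theorem mul_mul_quadratic_roots {lam : ℝ} (hlam : 4 ≤ lam) :
    lam * ((1 - √(1 - 4 / lam)) / 2) * ((1 + √(1 - 4 / lam)) / 2) = 1 := by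
  have hpos : 0 < lam := by linarith
  have hsq : √(1 - 4 / lam) ^ 2 = 1 - 4 / lam := by
    refine Real.sq_sqrt ?_
    rw [sub_nonneg, div_le_one hpos]
    exact hlam
  have hcancel : lam * (4 / lam) = 4 := by field_simp
  linear_combination (-lam / 4) * hsq + hcancel / 4

/-- For λ > 4, the pair (t₂, t₁) of roots of λt(1-t) = 1 solves the I₂ system. -/
theorem I2_offdiag_solution (lam : ℝ) (hlam : 4 < lam) :
    let t₁ : ℝ := (1 - Real.sqrt (1 - 4 / lam)) / 2
    let t₂ : ℝ := (1 + Real.sqrt (1 - 4 / lam)) / 2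
    t₂ = (1 + lam * t₂ ^ 2) / (1 + lam * t₂ ^ 2 + lam * t₁) ∧
    t₁ = (1 + lam * t₁ ^ 2) / (1 + lam * t₁ ^ 2 + lam * t₂) := by
  intro t₁ t₂
  have hsum : t₁ + t₂ = 1 := by ring
  have hprod : lam * t₁ * t₂ = 1 := mul_mul_quadratic_roots hlam.le
  exact ⟨eq_div_of_add_eq_one_of_mul_mul_eq_one (by linarith) (by linear_combination hprod),
    eq_div_of_add_eq_one_of_mul_mul_eq_one hsum hprod⟩
end
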